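/- arXiv:1411.0980 — 2 statements merged into one kernel-verified Lean document; each statement's English description precedes it below -/
import Mathlib

section
/- For 0 < λ < 1, the limit as α → 0⁺ of the MLFD(λ, α, β) pmf at each k is the geometric pmf (1−λ)λ^k. -/
open Real Filter Topology

noncomputable def mittagLeffler (α β z : ℝ) : ℝ :=
  ∑' k : ℕ, z ^ k / Real.Gamma (α * k + β)

/-- The pmf of the Mittag-Leffler function distribution MLFD(λ, α, β). -/
noncomputable def mlfdPmf (lam α β : ℝ) (k : ℕ) : ℝ :=
  lam ^ k / (Real.Gamma (α * k + β) * mittagLeffler α β lam)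

/-! At `α = 0` every Gamma factor in the series of `E_{α,β}(λ)` equals `Γ(β)`, so the series is
`Γ(β)⁻¹` times a geometric series. The terms are dominated uniformly in `α ≥ 0` by
`|λ|^j / c`, where `c > 0` bounds `Γ` from below on `[β, ∞)`, so dominated convergence makes
`E_{α,β}(λ)` continuous in `α` at `0` from the right, and with it the pmf. -/

lemma Real.continuousAt_Gamma_of_pos {x : ℝ} (hx : 0 < x) : ContinuousAt Gamma x :=
  (differentiableAt_Gamma fun m hm => by linarith [hm ▸ hx, m.cast_nonneg (α := ℝ)]).continuousAt

/-- `Γ` is continuous on the compact `[β, max β 2]` and increasing on `[2, ∞)` with `Γ(2) = 1`. -/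
lemma Real.exists_pos_forall_le_Gamma {β : ℝ} (hβ : 0 < β) :
    ∃ c > 0, ∀ x, β ≤ x → c ≤ Gamma x := by
  obtain ⟨x₀, hx₀, hmin⟩ := (isCompact_Icc (a := β) (b := max β 2)).exists_isMinOn
    ⟨β, le_rfl, le_max_left _ _⟩
    fun x hx => (continuousAt_Gamma_of_pos (hβ.trans_le hx.1)).continuousWithinAt
  refine ⟨min (Gamma x₀) 1, lt_min (Gamma_pos_of_pos (hβ.trans_le hx₀.1)) one_pos,
    fun x hx => ?_⟩
  rcases le_total x (max β 2) with hxB | hxB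
  · exact (min_le_left _ _).trans (hmin ⟨hx, hxB⟩)
  · have hx2 : 2 ≤ x := (le_max_right _ _).trans hxB
    calc min (Gamma x₀) 1 ≤ Gamma 2 := Gamma_two ▸ min_le_right _ _
      _ ≤ Gamma x := Gamma_strictMonoOn_Ici.monotoneOn Set.self_mem_Ici hx2 hx2

lemma continuousAt_Gamma_mul_add {β : ℝ} (hβ : 0 < β) (t : ℝ) :
    ContinuousAt (fun α : ℝ => Gamma (α * t + β)) 0 :=
  ContinuousAt.comp (g := Gamma) (by simpa using continuousAt_Gamma_of_pos hβ) (by fun_prop)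

lemma mittagLeffler_zero_left {z : ℝ} (hz : ‖z‖ < 1) (β : ℝ) :
    mittagLeffler 0 β z = (1 - z)⁻¹ / Gamma β := by
  simp only [mittagLeffler, zero_mul, zero_add]
  rw [tsum_div_const, tsum_geometric_of_norm_lt_one hz]

lemma continuousWithinAt_mittagLeffler_zero {z β : ℝ} (hz : ‖z‖ < 1) (hβ : 0 < β) :
    ContinuousWithinAt (fun α => mittagLeffler α β z) (Set.Ici 0) 0 := by
  obtain ⟨c, hc, hle⟩ := exists_pos_forall_le_Gamma hβ
  have hterm (j : ℕ) : ContinuousAt (fun α : ℝ => z ^ j / Gamma (α * j + β)) 0 :=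
    continuousAt_const.div (continuousAt_Gamma_mul_add hβ j)
      (by simpa using (Gamma_pos_of_pos hβ).ne')
  have hbound : ∀ᶠ α in 𝓝[Set.Ici 0] (0 : ℝ),
      ∀ j : ℕ, ‖z ^ j / Gamma (α * j + β)‖ ≤ ‖z‖ ^ j / c := by
    filter_upwards [self_mem_nhdsWithin] with α (hα : 0 ≤ α) j
    have hcΓ : c ≤ Gamma (α * j + β) := hle _ (le_add_of_nonneg_left (by positivity))
    rw [norm_div, norm_pow, norm_of_nonneg (hc.le.trans hcΓ)]
    exact div_le_div_of_nonneg_left (by positivity) hc hcΓ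
  exact tendsto_tsum_of_dominated_convergence
    ((summable_geometric_of_lt_one (norm_nonneg z) hz).div_const c)
    (fun j => (hterm j).continuousWithinAt) hbound

lemma mlfdPmf_zero_left {lam : ℝ} (hlam : ‖lam‖ < 1) {β : ℝ} (hβ : 0 < β) (k : ℕ) :
    mlfdPmf lam 0 β k = (1 - lam) * lam ^ k := by
  have h1 : 1 - lam ≠ 0 := sub_ne_zero.2 fun h => by simp [← h] at hlam
  have hΓ := (Gamma_pos_of_pos hβ).ne'
  rw [mlfdPmf, mittagLeffler_zero_left hlam, zero_mul, zero_add]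
  field_simp

lemma continuousWithinAt_mlfdPmf_zero {lam β : ℝ} (hlam : ‖lam‖ < 1) (hβ : 0 < β) (k : ℕ) :
    ContinuousWithinAt (fun α => mlfdPmf lam α β k) (Set.Ici 0) 0 := by
  have h1 : 1 - lam ≠ 0 := sub_ne_zero.2 fun h => by simp [← h] at hlam
  refine continuousWithinAt_const.div
    ((continuousAt_Gamma_mul_add hβ k).continuousWithinAt.mul
      (continuousWithinAt_mittagLeffler_zero hlam hβ)) ?_
  have hΓ := (Gamma_pos_of_pos hβ).ne'
  rw [mittagLeffler_zero_left hlam, zero_mul, zero_add]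
  exact mul_ne_zero hΓ (div_ne_zero (inv_ne_zero h1) hΓ)

/-- As `α → 0⁺`, the MLFD pmf tends to the geometric pmf `(1−λ)λ^k`. -/
theorem mlfd_tendsto_geometric (lam β : ℝ) (hlam0 : 0 < lam) (hlam1 : lam < 1)
    (hβ : 0 < β) (k : ℕ) :
    Tendsto (fun α : ℝ => mlfdPmf lam α β k) (nhdsWithin 0 (Set.Ioi 0))
      (nhds ((1 - lam) * lam ^ k)) := by
  have hlam : ‖lam‖ < 1 := by rw [norm_eq_abs, abs_lt]; constructor <;> linarith
  rw [← mlfdPmf_zero_left hlam hβ k]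
  exact (continuousWithinAt_mlfdPmf_zero hlam hβ k).tendsto.mono_left
    (nhdsWithin_mono _ Set.Ioi_subset_Ici_self)
end

section
/- Let X ~ MLFD(λ, α, β) with λ > 0, α > 0, β > 1. Then E[X] = E_{α,β−1}(λ)/(α E_{α,β}(λ)) + (1−β)/α. -/
/-!
Since `Γ(x + 1) = x Γ(x)`, weighting the terms of `E_{α,β}(λ)` by `αk + β - 1` turns them into the
terms of `E_{α,β-1}(λ)`. Writing `k = ((αk + β - 1) - (β - 1)) / α` therefore expresses the first
moment `∑ k λ^k / Γ(αk + β)` through `E_{α,β-1}(λ)` and `E_{α,β}(λ)`. Convergence of the series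
follows from the ratio test, using the bound `Γ(x + α) ≥ (x - 1)^α Γ(x)` given by the
log-convexity of `Γ`.
-/

open Real

open Filter Set

namespace Real

theorem inv_Gamma_eq_self_mul_inv_Gamma_add_one (x : ℝ) :
    (Gamma x)⁻¹ = x * (Gamma (x + 1))⁻¹ := by
  rcases ne_or_eq x 0 with hx | rfl
  · rw [Gamma_add_one hx, mul_inv, mul_inv_cancel_left₀ hx]
  · rw [zero_add, Gamma_zero, inv_zero, zero_mul]

/-- On `[x - 1, x]` the slope of `log ∘ Gamma` is `log (x - 1)`; convexity bounds the slope
on `[x, x + a]` from below by it. -/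
theorem rpow_mul_Gamma_le_Gamma_add {x a : ℝ} (hx : 1 < x) (ha : 0 < a) :
    (x - 1) ^ a * Gamma x ≤ Gamma (x + a) := by
  have hx₀ : 0 < x - 1 := by linarith
  have hslope := convexOn_log_Gamma.slope_mono_adjacent (x := x - 1) (y := x) (z := x + a)
    (mem_Ioi.mpr hx₀) (mem_Ioi.mpr (by linarith)) (by linarith) (by linarith)
  have hrec : Gamma x = (x - 1) * Gamma (x - 1) := by
    simpa using Gamma_add_one hx₀.ne'
  have hΓ₀ : 0 < Gamma (x - 1) := Gamma_pos_of_pos hx₀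
  have hΓ : 0 < Gamma x := Gamma_pos_of_pos (by linarith)
  simp only [Function.comp_apply, sub_sub_cancel, div_one, add_sub_cancel_left] at hslope
  rw [hrec, log_mul hx₀.ne' hΓ₀.ne', add_sub_cancel_right, le_div_iff₀ ha] at hslope
  rw [← log_le_log_iff (by positivity) (Gamma_pos_of_pos (by linarith)), log_mul (by positivity)
    hΓ.ne', log_rpow hx₀, hrec, log_mul hx₀.ne' hΓ₀.ne']
  linarith

end Real

theorem summable_pow_div_Gamma_mul_add (z : ℝ) {α : ℝ} (hα : 0 < α) (β : ℝ) :
    Summable fun k : ℕ => z ^ k / Gamma (α * k + β) := by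
  have harg : Tendsto (fun k : ℕ => α * k + β - 1) atTop atTop :=
    tendsto_atTop_add_const_right _ _ <| tendsto_atTop_add_const_right _ _ <|
      tendsto_natCast_atTop_atTop.const_mul_atTop hα
  refine summable_of_ratio_norm_eventually_le (r := 1 / 2) (by norm_num) ?_
  filter_upwards [harg.eventually_gt_atTop 0,
    ((tendsto_rpow_atTop hα).comp harg).eventually_ge_atTop (2 * |z|)] with k hk hbig
  have hΓ : 0 < Gamma (α * k + β) := Gamma_pos_of_pos (by linarith)
  have hΓ' : 0 < Gamma (α * k + β + α) := Gamma_pos_of_pos (by linarith)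
  have hgrowth : 2 * |z| * Gamma (α * k + β) ≤ Gamma (α * k + β + α) :=
    (mul_le_mul_of_nonneg_right hbig hΓ.le).trans (rpow_mul_Gamma_le_Gamma_add (by linarith) hα)
  rw [Nat.cast_succ, show α * (k + 1 : ℝ) + β = α * k + β + α by ring]
  simp only [norm_div, norm_mul, norm_pow, Real.norm_eq_abs, abs_of_pos hΓ, abs_of_pos hΓ',
    pow_succ]
  rw [div_le_iff₀ hΓ', show 1 / 2 * (|z| ^ k / Gamma (α * k + β)) * Gamma (α * k + β + α)
    = |z| ^ k * (Gamma (α * k + β + α) / (2 * Gamma (α * k + β))) by field_simp]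
  gcongr
  rw [le_div_iff₀ (by positivity)]
  linarith

theorem hasSum_mittagLeffler {α : ℝ} (β z : ℝ) (hα : 0 < α) :
    HasSum (fun k : ℕ => z ^ k / Gamma (α * k + β)) (mittagLeffler α β z) :=
  (summable_pow_div_Gamma_mul_add z hα β).hasSum

theorem mittagLeffler_pos {α β z : ℝ} (hα : 0 < α) (hβ : 0 < β) (hz : 0 < z) :
    0 < mittagLeffler α β z :=
  (summable_pow_div_Gamma_mul_add z hα β).tsum_pos
    (fun k => (div_pos (pow_pos hz k) (Gamma_pos_of_pos (by positivity))).le) 0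
    (by simpa using Gamma_pos_of_pos hβ)

theorem hasSum_mittagLeffler_sub_one {α : ℝ} (β z : ℝ) (hα : 0 < α) :
    HasSum (fun k : ℕ => (α * k + β - 1) * (z ^ k / Gamma (α * k + β)))
      (mittagLeffler α (β - 1) z) := by
  convert hasSum_mittagLeffler (β - 1) z hα using 2 with k
  rw [div_eq_mul_inv, div_eq_mul_inv, inv_Gamma_eq_self_mul_inv_Gamma_add_one (α * k + (β - 1))]
  ring_nf

theorem hasSum_natCast_mul_pow_div_Gamma {α : ℝ} (β z : ℝ) (hα : 0 < α) :
    HasSum (fun k : ℕ => (k : ℝ) * (z ^ k / Gamma (α * k + β)))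
      ((mittagLeffler α (β - 1) z - (β - 1) * mittagLeffler α β z) / α) := by
  refine (((hasSum_mittagLeffler_sub_one β z hα).sub
    ((hasSum_mittagLeffler β z hα).mul_left (β - 1))).div_const α).congr_fun fun k => ?_
  field_simp
  ring

/-- Mean of MLFD: `E[X] = E_{α,β−1}(λ)/(α E_{α,β}(λ)) + (1−β)/α` for `β > 1`. -/
theorem mlfd_mean (lam α β : ℝ) (hlam : 0 < lam) (hα : 0 < α) (hβ : 1 < β) :
    ∑' k : ℕ, (k : ℝ) * mlfdPmf lam α β k
      = mittagLeffler α (β - 1) lam / (α * mittagLeffler α β lam) + (1 - β) / α := by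
  have hE : mittagLeffler α β lam ≠ 0 := (mittagLeffler_pos hα (by linarith) hlam).ne'
  have hpmf (k : ℕ) : (k : ℝ) * mlfdPmf lam α β k
      = (k : ℝ) * (lam ^ k / Gamma (α * k + β)) / mittagLeffler α β lam := by
    rw [mlfdPmf, div_mul_eq_div_div, mul_div_assoc]
  rw [tsum_congr hpmf, ((hasSum_natCast_mul_pow_div_Gamma β lam hα).div_const _).tsum_eq]
  field_simp
  ring
end
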